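/- arXiv:1901.07285 — 4 statements merged into one kernel-verified Lean document; each statement's English description precedes it below -/
import Mathlib

section
/- For natural numbers p, n ≥ 2, if p^(n-1) divides n!, then p = 2 and n is a power of 2. -/
/-!
By Legendre's formula `(q - 1) · v_q(n!) = n - s_q(n)`, where `s_q(n) ≥ 1` is the base-`q` digit
sum of `n`. If `q^a` exactly divides `p`, then `q^(a(n-1))` divides `n!`, so
`(q - 1) · a · (n - 1) ≤ n - 1`, i.e. `(q - 1) · a ≤ 1`; hence `p = 2`. For `p = 2` the same
inequality reads `n - 1 ≤ n - s_2(n)`, so `n` has a single binary digit `1`.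
-/

open Nat

namespace Nat

theorem digits_sum_pos (b : ℕ) {n : ℕ} (hn : n ≠ 0) : 0 < (b.digits n).sum :=
  (pos_of_ne_zero (getLast_digit_ne_zero b hn)).trans_le (List.le_sum_of_mem (List.getLast_mem _))

theorem exists_eq_pow_of_digits_sum_eq_one {b : ℕ} (hb : 1 < b) :
    ∀ {n : ℕ}, (b.digits n).sum = 1 → ∃ m, n = b ^ m := by
  intro n
  induction n using Nat.strong_induction_on with
  | _ n ih =>
    intro h
    rcases Nat.eq_zero_or_pos n with rfl | hn
    · simp at h
    rw [digits_def' hb hn, List.sum_cons] at h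
    have hdiv := div_add_mod n b
    rcases Nat.eq_zero_or_pos (n % b) with hmod | hmod
    · obtain ⟨m, hm⟩ := ih (n / b) (div_lt_self hn hb) (by omega)
      exact ⟨m + 1, by rw [hm] at hdiv; rw [pow_succ]; linarith⟩
    · have hquot : n / b = 0 := by
        by_contra hquot
        have := digits_sum_pos b hquot
        omega
      exact ⟨0, by rw [hquot] at hdiv; rw [pow_zero]; omega⟩

theorem sub_one_mul_add_digits_sum_le_of_pow_dvd_factorial {q k n : ℕ} (hq : q.Prime)
    (h : q ^ k ∣ n !) : (q - 1) * k + (q.digits n).sum ≤ n := by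
  have hk : k ≤ (n !).factorization q :=
    (hq.pow_dvd_iff_le_factorization (factorial_ne_zero n)).mp h
  have hlegendre := sub_one_mul_factorization_factorial (n := n) hq
  have := digit_sum_le q n
  have := Nat.mul_le_mul_left (q - 1) hk
  omega

theorem sub_one_mul_factorization_le_one_of_pow_dvd_factorial {p q n : ℕ} (hq : q.Prime)
    (hn : 2 ≤ n) (h : p ^ (n - 1) ∣ n !) : (q - 1) * p.factorization q ≤ 1 := by
  have hpow : q ^ (p.factorization q * (n - 1)) ∣ n ! :=
    (pow_mul q _ _ ▸ pow_dvd_pow_of_dvd (ordProj_dvd p q) _).trans h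
  have hle := sub_one_mul_add_digits_sum_le_of_pow_dvd_factorial hq hpow
  have := digits_sum_pos q (n := n) (by omega)
  rw [← mul_assoc] at hle
  exact Nat.le_of_mul_le_mul_right (c := n - 1) (by omega) (by omega)

theorem eq_two_of_pow_dvd_factorial {p n : ℕ} (hp : 2 ≤ p) (hn : 2 ≤ n) (h : p ^ (n - 1) ∣ n !) :
    p = 2 := by
  suffices p ∣ 2 from le_antisymm (le_of_dvd two_pos this) hp
  rw [← factorization_le_iff_dvd (by omega) two_ne_zero]
  intro q
  by_cases hq : q.Prime
  · have hbound := sub_one_mul_factorization_le_one_of_pow_dvd_factorial hq hn h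
    rcases Nat.eq_zero_or_pos (p.factorization q) with hzero | hpos
    · rw [hzero]
      exact zero_le _
    obtain rfl : q = 2 := by
      have := (Nat.le_mul_of_pos_right (q - 1) hpos).trans hbound
      have := hq.two_le
      omega
    rw [prime_two.factorization_self]
    omega
  · simp [factorization_eq_zero_of_not_prime _ hq]

end Nat

theorem stmt1 (p n : ℕ) (hp : 2 ≤ p) (hn : 2 ≤ n) (h : p ^ (n - 1) ∣ n.factorial) :
    p = 2 ∧ ∃ m : ℕ, n = 2 ^ m := by
  obtain rfl := eq_two_of_pow_dvd_factorial hp hn h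
  refine ⟨rfl, exists_eq_pow_of_digits_sum_eq_one one_lt_two ?_⟩
  have := sub_one_mul_add_digits_sum_le_of_pow_dvd_factorial prime_two h
  have := digits_sum_pos 2 (n := n) (by omega)
  omega
end

section
/- For every natural number n ≥ 2, 4^(n-1) does not divide n!. -/
open Nat in
theorem Nat.not_two_pow_dvd_factorial_of_le {n k : ℕ} (hn : n ≠ 0) (hk : n ≤ k) :
    ¬ 2 ^ k ∣ n ! := by
  intro h
  have hlt : (k : ℕ∞) < n :=
    (pow_dvd_iff_le_emultiplicity.mp h).trans_lt (emultiplicity_two_factorial_lt hn)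
  exact absurd (Nat.cast_lt.mp hlt) (by omega)

theorem stmt2 (n : ℕ) (hn : 2 ≤ n) : ¬ 4 ^ (n - 1) ∣ n.factorial := by
  rw [show (4 : ℕ) = 2 ^ 2 by rfl, ← pow_mul]
  exact Nat.not_two_pow_dvd_factorial_of_le (by omega) (by omega)
end

section
/- Let S = Q₁ × ⋯ × Q_r be a direct product of groups and let P ≤ S be a subdirect subgroup (each coordinate projection maps P onto Q_i), where each Q_i is a nonabelian simple group. Then for each i, the intersection P ∩ ker(π_i) projected to any coordinate j is either trivial or all of Q_j; more precisely, P is an internal direct product of full strips whose supports partition the index set (Scott's Lemma). -/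
/-!
Work inside `P`, with the surjections `p ↦ p i` onto the simple groups `Q i` and their kernels
`K i`. The image in `Q i` of a normal subgroup of `P` is normal, hence trivial or all of `Q i`.
Consequently `K i ≤ K j` forces `K i = K j`; and since `Q i` is perfect, two normal subgroups of `P`
that both map onto `Q i` meet in a subgroup that still maps onto `Q i`, as it contains their
commutator. So the intersection of those `K j` that differ from `K i` maps onto `Q i`: this is the
full strip through `i`. Peeling off strip components one coordinate at a time writes every element
of `P` as a product of strip elements.
-/

/-- The support of a subgroup `D` of a direct product: the set of coordinates
where the projection of `D` is nontrivial. -/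
def stripSupport {ι : Type*} (Q : ι → Type*) [∀ i, Group (Q i)]
    (D : Subgroup (∀ i, Q i)) : Set ι :=
  {i | D.map (Pi.evalMonoidHom Q i) ≠ ⊥}

/-- `D` is a full strip: it is nontrivial and each coordinate projection restricted to `D`
is either trivial, or surjective and injective. -/
def IsFullStrip {ι : Type*} (Q : ι → Type*) [∀ i, Group (Q i)]
    (D : Subgroup (∀ i, Q i)) : Prop :=
  D ≠ ⊥ ∧ ∀ i, D.map (Pi.evalMonoidHom Q i) = ⊥ ∨
    (D.map (Pi.evalMonoidHom Q i) = ⊤ ∧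
      Set.InjOn (fun x => x i) (D : Set (∀ i, Q i)))

open Function

section SimpleImage

variable {G A B : Type*} [Group G] [Group A] [Group B] [IsSimpleGroup A]

theorem Subgroup.map_eq_bot_or_eq_top_of_surjective {f : G →* A} (hf : Surjective f)
    (N : Subgroup G) [hN : N.Normal] : N.map f = ⊥ ∨ N.map f = ⊤ :=
  IsSimpleGroup.eq_bot_or_eq_top_of_normal _ (hN.map f hf)

theorem MonoidHom.ker_le_ker_symm [Nontrivial B] {f : G →* A} {g : G →* B}
    (hf : Surjective f) (hg : Surjective g) (h : f.ker ≤ g.ker) : g.ker ≤ f.ker := by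
  refine (Subgroup.map_eq_bot_or_eq_top_of_surjective hf g.ker).elim
    (Subgroup.map_eq_bot_iff _).1 fun htop => ?_
  have hker : g.ker = ⊤ := by
    rw [eq_top_iff, ← Subgroup.comap_top f, ← htop, Subgroup.comap_map_eq, sup_eq_left.2 h]
  obtain ⟨b, hb⟩ := exists_ne (1 : B)
  obtain ⟨x, rfl⟩ := hg b
  exact (hb (hker.ge (Subgroup.mem_top x))).elim

theorem Subgroup.map_inf_eq_top_of_surjective (hA : ∃ a b : A, a * b ≠ b * a)
    {f : G →* A} (hf : Surjective f) {N₁ N₂ : Subgroup G} [N₁.Normal] [N₂.Normal]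
    (h₁ : N₁.map f = ⊤) (h₂ : N₂.map f = ⊤) : (N₁ ⊓ N₂).map f = ⊤ := by
  refine (Subgroup.map_eq_bot_or_eq_top_of_surjective hf (N₁ ⊓ N₂)).resolve_left fun hbot => ?_
  obtain ⟨a, b, hab⟩ := hA
  have hcomm : ⁅(⊤ : Subgroup A), (⊤ : Subgroup A)⁆ ≤ ⊥ := by
    simpa only [Subgroup.map_commutator, h₁, h₂, hbot] using
      Subgroup.map_mono (f := f) (Subgroup.commutator_le_inf N₁ N₂)
  exact hab (commutatorElement_eq_one_iff_mul_comm.1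
    (hcomm (Subgroup.commutator_mem_commutator trivial trivial)))

end SimpleImage

namespace Scott

variable {ι G : Type*} [Group G] {Q : ι → Type*} [∀ i, Group (Q i)] {f : ∀ i, G →* Q i}

variable (f) in
/-- Its support is `{j | (f j).ker = (f i).ker}`, on which it is a full strip. -/
def strip (i : ι) : Subgroup G :=
  ⨅ (j) (_ : ¬ (f i).ker ≤ (f j).ker), (f j).ker

theorem strip_le_ker {i j : ι} (h : ¬ (f i).ker ≤ (f j).ker) : strip f i ≤ (f j).ker :=
  iInf₂_le j h

theorem map_strip_eq_bot {i j : ι} (h : ¬ (f i).ker ≤ (f j).ker) : (strip f i).map (f j) = ⊥ :=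
  (Subgroup.map_eq_bot_iff _).2 (strip_le_ker h)

theorem strip_inf_ker_eq_bot (hinj : ⨅ i, (f i).ker = ⊥) (i : ι) :
    strip f i ⊓ (f i).ker = ⊥ := by
  rw [eq_bot_iff, ← hinj]
  refine le_iInf fun j => ?_
  by_cases h : (f i).ker ≤ (f j).ker
  · exact inf_le_right.trans h
  · exact inf_le_left.trans (strip_le_ker h)

variable [∀ i, IsSimpleGroup (Q i)]

theorem map_biInf_ker_eq_top (hnab : ∀ i, ∃ a b : Q i, a * b ≠ b * a)
    (hf : ∀ i, Surjective (f i)) (i : ι) (T : Finset ι)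
    (hT : ∀ j ∈ T, ¬ (f i).ker ≤ (f j).ker) : (⨅ j ∈ T, (f j).ker).map (f i) = ⊤ := by
  classical
  induction T using Finset.induction_on with
  | empty => simpa [MonoidHom.range_eq_map] using MonoidHom.range_eq_top.2 (hf i)
  | insert j T _ ih =>
    have : (⨅ k ∈ T, (f k).ker).Normal :=
      Subgroup.normal_iInf_normal fun k => Subgroup.normal_iInf_normal fun _ => (f k).normal_ker
    have hj : (f j).ker.map (f i) = ⊤ :=
      (Subgroup.map_eq_bot_or_eq_top_of_surjective (hf i) _).resolve_left fun h =>
        hT j (Finset.mem_insert_self j T)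
          (MonoidHom.ker_le_ker_symm (hf j) (hf i) ((Subgroup.map_eq_bot_iff _).1 h))
    rw [Finset.iInf_insert]
    exact Subgroup.map_inf_eq_top_of_surjective (hnab i) (hf i) hj
      (ih fun k hk => hT k (Finset.mem_insert_of_mem hk))

theorem map_strip_eq_top [Finite ι] (hnab : ∀ i, ∃ a b : Q i, a * b ≠ b * a)
    (hf : ∀ i, Surjective (f i)) (i : ι) : (strip f i).map (f i) = ⊤ := by
  classical
  cases nonempty_fintype ι
  simpa [strip] using map_biInf_ker_eq_top hnab hf i
    (Finset.univ.filter fun j => ¬ (f i).ker ≤ (f j).ker) (by simp)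

theorem strip_ne_bot [Finite ι] (hnab : ∀ i, ∃ a b : Q i, a * b ≠ b * a)
    (hf : ∀ i, Surjective (f i)) (i : ι) : strip f i ≠ ⊥ := fun h => by
  simpa [h] using map_strip_eq_top hnab hf i

theorem strip_eq_of_ker_le (hf : ∀ i, Surjective (f i)) {i j : ι}
    (h : (f i).ker ≤ (f j).ker) : strip f i = strip f j := by
  have hker : (f i).ker = (f j).ker := le_antisymm h (MonoidHom.ker_le_ker_symm (hf i) (hf j) h)
  unfold strip
  rw [hker]

theorem strip_eq_of_map_ne_bot (hf : ∀ i, Surjective (f i)) {i j : ι}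
    (h : (strip f i).map (f j) ≠ ⊥) : strip f i = strip f j :=
  strip_eq_of_ker_le hf (not_not.1 (mt map_strip_eq_bot h))

theorem map_strip_eq_bot_or_eq_top [Finite ι] (hnab : ∀ i, ∃ a b : Q i, a * b ≠ b * a)
    (hf : ∀ i, Surjective (f i)) (hinj : ⨅ i, (f i).ker = ⊥) (i j : ι) :
    (strip f i).map (f j) = ⊥ ∨
      ((strip f i).map (f j) = ⊤ ∧ strip f i ⊓ (f j).ker = ⊥) := by
  by_cases h : (f i).ker ≤ (f j).ker
  · rw [strip_eq_of_ker_le hf h]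
    exact Or.inr ⟨map_strip_eq_top hnab hf j, strip_inf_ker_eq_bot hinj j⟩
  · exact Or.inl (map_strip_eq_bot h)

theorem iSup_strip_eq_top [Finite ι] (hnab : ∀ i, ∃ a b : Q i, a * b ≠ b * a)
    (hf : ∀ i, Surjective (f i)) (hinj : ⨅ i, (f i).ker = ⊥) : ⨆ i, strip f i = ⊤ := by
  classical
  cases nonempty_fintype ι
  suffices key : ∀ (T : Finset ι) (x : G), (∀ j ∉ T, f j x = 1) → x ∈ ⨆ i, strip f i from
    eq_top_iff.2 fun x _ => key Finset.univ x (by simp)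
  intro T
  induction T using Finset.induction_on with
  | empty =>
    intro x hx
    have hx1 : x = 1 := by
      rw [← Subgroup.mem_bot, ← hinj, Subgroup.mem_iInf]
      exact fun j => hx j (Finset.notMem_empty j)
    exact hx1 ▸ one_mem _
  | insert i T _ ih =>
    intro x hx
    obtain ⟨d, hd, hdx⟩ : f i x ∈ (strip f i).map (f i) := map_strip_eq_top hnab hf i ▸ trivial
    have hrest : ∀ j ∉ T, f j (d⁻¹ * x) = 1 := by
      intro j hj
      by_cases h : (f i).ker ≤ (f j).ker
      · exact h (by simp [hdx])
      · have hji : j ≠ i := by rintro rfl; exact h le_rfl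
        rw [map_mul, map_inv, MonoidHom.mem_ker.1 (strip_le_ker h hd), hx j (by simp [hji, hj]),
          inv_one, one_mul]
    rw [← mul_inv_cancel_left d x]
    exact mul_mem (Subgroup.mem_iSup_of_mem i hd) (ih _ hrest)

end Scott

section Subdirect

variable {ι : Type*} {Q : ι → Type*} [∀ i, Group (Q i)] {P : Subgroup (∀ i, Q i)}

variable (P) in
abbrev subdirectProj (i : ι) : P →* Q i :=
  (Pi.evalMonoidHom Q i).comp P.subtype

theorem subdirectProj_surjective {i : ι} (hsub : P.map (Pi.evalMonoidHom Q i) = ⊤) :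
    Surjective (subdirectProj P i) := by
  rw [← MonoidHom.range_eq_top, MonoidHom.range_comp, Subgroup.range_subtype, hsub]

theorem iInf_ker_subdirectProj : ⨅ i, (subdirectProj P i).ker = ⊥ := by
  refine eq_bot_iff.2 fun x hx => Subtype.ext (funext fun i => ?_)
  simpa using Subgroup.mem_iInf.1 hx i

theorem stripSupport_map_subtype (H : Subgroup P) :
    stripSupport Q (H.map P.subtype) = {i | H.map (subdirectProj P i) ≠ ⊥} := by
  simp only [stripSupport, Subgroup.map_map]

theorem isFullStrip_map_subtype {H : Subgroup P} (hH : H ≠ ⊥)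
    (h : ∀ i, H.map (subdirectProj P i) = ⊥ ∨
      (H.map (subdirectProj P i) = ⊤ ∧ H ⊓ (subdirectProj P i).ker = ⊥)) :
    IsFullStrip Q (H.map P.subtype) := by
  refine ⟨(Subgroup.map_eq_bot_iff_of_injective _ P.subtype_injective).not.2 hH, fun i => ?_⟩
  rw [Subgroup.map_map]
  refine (h i).imp_right fun ⟨htop, hinj⟩ => ⟨htop, ?_⟩
  rintro _ ⟨a, ha, rfl⟩ _ ⟨b, hb, rfl⟩ hab
  have hab' : a⁻¹ * b ∈ H ⊓ (subdirectProj P i).ker :=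
    ⟨H.mul_mem (H.inv_mem ha) hb, by simpa [inv_mul_eq_one] using hab⟩
  rw [hinj, Subgroup.mem_bot, inv_mul_eq_one] at hab'
  rw [hab']

end Subdirect

open Scott in
/-- Scott's Lemma: a subdirect subgroup of a finite direct product of nonabelian
simple groups is the direct product of full strips whose supports partition the index set. -/
theorem stmt4 {ι : Type*} [Fintype ι] (Q : ι → Type*) [∀ i, Group (Q i)]
    [∀ i, IsSimpleGroup (Q i)] (hnab : ∀ i, ∃ a b : Q i, a * b ≠ b * a)
    (P : Subgroup (∀ i, Q i))
    (hsub : ∀ i, P.map (Pi.evalMonoidHom Q i) = ⊤) :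
    ∃ (m : ℕ) (D : Fin m → Subgroup (∀ i, Q i)),
      (∀ j, IsFullStrip Q (D j)) ∧
      (∀ j j', j ≠ j' → Disjoint (stripSupport Q (D j)) (stripSupport Q (D j'))) ∧
      (⋃ j, stripSupport Q (D j)) = Set.univ ∧
      (⨆ j, D j) = P := by
  classical
  have hf : ∀ i, Surjective (subdirectProj P i) := fun i => subdirectProj_surjective (hsub i)
  let e := Fintype.equivFin (Set.range (strip (subdirectProj P)))
  refine ⟨_, fun k => (e.symm k : Subgroup P).map P.subtype, fun k => ?_, fun k k' hkk' => ?_,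
    ?_, ?_⟩
  · obtain ⟨i, hi⟩ := (e.symm k).2
    dsimp only
    rw [← hi]
    exact isFullStrip_map_subtype (strip_ne_bot hnab hf i)
      (map_strip_eq_bot_or_eq_top hnab hf iInf_ker_subdirectProj i)
  · obtain ⟨i, hi⟩ := (e.symm k).2
    obtain ⟨i', hi'⟩ := (e.symm k').2
    dsimp only
    rw [← hi, ← hi', stripSupport_map_subtype, stripSupport_map_subtype, Set.disjoint_left]
    refine fun j hj hj' => hkk' (e.symm.injective (Subtype.ext ?_))
    rw [← hi, ← hi', strip_eq_of_map_ne_bot hf hj, strip_eq_of_map_ne_bot hf hj']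
  · refine Set.eq_univ_of_forall fun j => Set.mem_iUnion.2 ⟨e ⟨_, j, rfl⟩, ?_⟩
    dsimp only
    rw [e.symm_apply_apply, stripSupport_map_subtype]
    exact (map_strip_eq_top hnab hf j).trans_ne top_ne_bot
  · rw [← Subgroup.map_iSup, e.symm.iSup_comp (g := fun s : Set.range _ => (s : Subgroup P)),
      ← sSup_eq_iSup', sSup_range,
      iSup_strip_eq_top hnab hf iInf_ker_subdirectProj, ← MonoidHom.range_eq_map,
      Subgroup.range_subtype]
end

section
/- Let q ≥ 2 be a natural number. Then there exists an odd prime p dividing q² + 1 that does not divide q³·(q⁶ − 1). -/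
/-!
Since `q ≥ 2`, the number `q² + 1` exceeds `2`, and it is never divisible by `4`, so it is not a
power of `2` and has an odd prime factor `p`. Modulo `p` we have `q² = -1`, hence `q ≠ 0` and
`q⁶ = -1`, so `q³ (q⁶ - 1) = -2 q³` is nonzero because `p` is odd.
-/

theorem Nat.not_four_dvd_sq_add_one (q : ℕ) : ¬ 4 ∣ q ^ 2 + 1 := by
  rw [← ZMod.natCast_eq_zero_iff]
  push_cast
  generalize (q : ZMod 4) = x
  revert x
  decide

theorem Nat.exists_odd_prime_dvd_of_not_four_dvd {n : ℕ} (hn : 2 < n) (h4 : ¬ 4 ∣ n) :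
    ∃ p, p.Prime ∧ Odd p ∧ p ∣ n := by
  by_contra! h
  set k := n.primeFactorsList.length
  have hpow : n = 2 ^ k :=
    Nat.eq_prime_pow_of_unique_prime_dvd (by omega) fun {p} hp hdvd =>
      hp.eq_two_or_odd'.resolve_right fun hodd => h p hp hodd hdvd
  have hk : 2 ≤ k := by
    by_contra! hk
    interval_cases k <;> omega
  exact h4 (hpow ▸ Nat.pow_dvd_pow 2 hk)

theorem Nat.not_dvd_pow_three_mul_pow_six_sub_one_of_dvd_sq_add_one {p q : ℕ} [Fact p.Prime]
    (hp2 : p ≠ 2) (h : p ∣ q ^ 2 + 1) : ¬ p ∣ q ^ 3 * (q ^ 6 - 1) := by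
  have hsq : (q : ZMod p) ^ 2 = -1 := by
    rw [eq_neg_iff_add_eq_zero]
    exact_mod_cast (ZMod.natCast_eq_zero_iff _ p).2 h
  have hq : (q : ZMod p) ≠ 0 := fun h0 => by simp [h0] at hsq
  have htwo : (2 : ZMod p) ≠ 0 := by
    exact_mod_cast (ZMod.natCast_eq_zero_iff 2 p).not.2
      fun h2 => hp2 ((Nat.prime_dvd_prime_iff_eq Fact.out Nat.prime_two).1 h2)
  have hq6 : 1 ≤ q ^ 6 := Nat.one_le_pow _ _ (Nat.pos_of_ne_zero (by rintro rfl; simp at hq))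
  have hval : (q : ZMod p) ^ 3 * (q ^ 6 - 1) = -(2 * q ^ 3) := by
    linear_combination (q : ZMod p) ^ 3 * (q ^ 4 - q ^ 2 + 1) * hsq
  rw [← ZMod.natCast_eq_zero_iff]
  push_cast [hq6]
  rw [hval]
  exact neg_ne_zero.2 (mul_ne_zero htwo (pow_ne_zero 3 hq))

theorem stmt12 (q : ℕ) (hq : 2 ≤ q) :
    ∃ p : ℕ, p.Prime ∧ Odd p ∧ p ∣ q ^ 2 + 1 ∧ ¬ p ∣ q ^ 3 * (q ^ 6 - 1) := by
  obtain ⟨p, hp, hodd, hdvd⟩ :=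
    Nat.exists_odd_prime_dvd_of_not_four_dvd (by nlinarith) (Nat.not_four_dvd_sq_add_one q)
  have := Fact.mk hp
  exact ⟨p, hp, hodd, hdvd,
    Nat.not_dvd_pow_three_mul_pow_six_sub_one_of_dvd_sq_add_one (hodd.ne_two_of_dvd_nat dvd_rfl)
      hdvd⟩
end
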